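/- arXiv:1702.06466 — 3 statements merged into one kernel-verified Lean document; each statement's English description precedes it below -/
import Mathlib

section
/- Let p, n be positive integers, a an integer, b a positive integer with gcd(a,b)=1, χ an integer, and N a positive integer (playing the role of b·|∂S|) such that b divides N. Suppose that for every positive integer m the difference D(m) := [(a/b)(n+mp)² + (2χ/N)(n+mp)] − [(a/b)n² + (2χ/N)n] is an integer. If b divides p², then N divides 2p²χ. -/
theorem stmt_0 (p n b N : ℕ) (hp : 0 < p) (hn : 0 < n) (hb : 0 < b) (hN : 0 < N)
    (a χ : ℤ) (hgcd : Int.gcd a b = 1) (hbN : (b : ℤ) ∣ (N : ℤ))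
    (hD : ∀ m : ℕ, 0 < m → ∃ k : ℤ,
      ((a : ℚ) / (b : ℚ) * ((n : ℚ) + (m : ℚ) * (p : ℚ)) ^ 2
        + (2 * (χ : ℚ)) / (N : ℚ) * ((n : ℚ) + (m : ℚ) * (p : ℚ)))
      - ((a : ℚ) / (b : ℚ) * (n : ℚ) ^ 2 + (2 * (χ : ℚ)) / (N : ℚ) * (n : ℚ)) = (k : ℚ))
    (hbp : (b : ℤ) ∣ (p : ℤ) ^ 2) :
    (N : ℤ) ∣ 2 * (p : ℤ) ^ 2 * χ := by
  obtain ⟨k, hk⟩ := hD p hp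
  obtain ⟨t, ht⟩ := hbp
  refine ⟨k - a * t * (2 * n + b * t), ?_⟩
  have hbQ : (b : ℚ) ≠ 0 := by positivity
  have hNQ : (N : ℚ) ≠ 0 := by positivity
  have htQ : ((p : ℚ)) ^ 2 = (b : ℚ) * (t : ℚ) := by exact_mod_cast ht
  have hpp : (p : ℚ) * (p : ℚ) = (b : ℚ) * (t : ℚ) := by rw [← sq]; exact htQ
  rw [hpp] at hk
  field_simp at hk
  have key : (b : ℚ) * (2 * (p : ℚ) ^ 2 * (χ : ℚ))
      = (b : ℚ) * ((N : ℚ) * ((k : ℚ) - (a : ℚ) * (t : ℚ) * (2 * (n : ℚ) + (b : ℚ) * (t : ℚ)))) := by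
    rw [htQ]
    linear_combination hk
  have := mul_left_cancel₀ hbQ key
  exact_mod_cast this
end

section
/- Let f : ℕ → ℤ, A, B, C ∈ ℚ, n₀ ∈ ℕ, p ≥ 1, with f(n₀ + mp) = A(n₀+mp)² + B(n₀+mp) + C for all m ≥ 0. If additionally 2A ∈ ℤ (integral slope case), then Bp + Ap² ∈ ℚ satisfies: 2(Bp + Ap² + 2An₀p) ∈ ℤ; in particular if p = 1 and 2A ∈ ℤ then 2B ∈ ℤ. -/
lemma quadratic_forward_difference_eq_intCast {A B C x h : ℚ} {a b : ℤ}
    (ha : (a : ℚ) = A * x ^ 2 + B * x + C) (hb : (b : ℚ) = A * (x + h) ^ 2 + B * (x + h) + C) :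
    B * h + A * h ^ 2 + 2 * A * x * h = ((b - a : ℤ) : ℚ) := by
  push_cast
  rw [ha, hb]
  ring

theorem stmt_10_general (f : ℕ → ℤ) (A B C : ℚ) (n₀ p : ℕ)
    (hf : ∀ m : ℕ, ((f (n₀ + m * p) : ℚ))
      = A * ((n₀ : ℚ) + (m : ℚ) * (p : ℚ)) ^ 2 + B * ((n₀ : ℚ) + (m : ℚ) * (p : ℚ)) + C)
    (hA : ∃ k : ℤ, 2 * A = (k : ℚ)) :
    (∃ k : ℤ, 2 * (B * (p : ℚ) + A * (p : ℚ) ^ 2 + 2 * A * (n₀ : ℚ) * (p : ℚ)) = (k : ℚ)) ∧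
    (p = 1 → ∃ k : ℤ, 2 * B = (k : ℚ)) := by
  obtain ⟨d, hd⟩ : ∃ d : ℤ, B * p + A * p ^ 2 + 2 * A * n₀ * p = d :=
    ⟨_, quadratic_forward_difference_eq_intCast (by simpa using hf 0) (by simpa using hf 1)⟩
  refine ⟨⟨2 * d, by rw [hd]; push_cast; ring⟩, ?_⟩
  rintro rfl
  obtain ⟨k, hk⟩ := hA
  refine ⟨2 * d - k * (2 * n₀ + 1), ?_⟩
  push_cast at hd ⊢
  linear_combination 2 * hd - (2 * (n₀ : ℚ) + 1) * hk

theorem stmt_10 (f : ℕ → ℤ) (A B C : ℚ) (n₀ p : ℕ) (hp : 1 ≤ p)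
    (hf : ∀ m : ℕ, ((f (n₀ + m * p) : ℚ))
      = A * ((n₀ : ℚ) + (m : ℚ) * (p : ℚ)) ^ 2 + B * ((n₀ : ℚ) + (m : ℚ) * (p : ℚ)) + C)
    (hA : ∃ k : ℤ, 2 * A = (k : ℚ)) :
    (∃ k : ℤ, 2 * (B * (p : ℚ) + A * (p : ℚ) ^ 2 + 2 * A * (n₀ : ℚ) * (p : ℚ)) = (k : ℚ)) ∧
    (p = 1 → ∃ k : ℤ, 2 * B = (k : ℚ)) :=
  stmt_10_general f A B C n₀ p hf hA
end

section
/- The set of nonnegative-integer solutions v ∈ ℕ^k of a homogeneous linear equation Σᵢ cᵢvᵢ = 0 (with cᵢ ∈ ℤ fixed) is an additive submonoid of ℕ^k in which every nonzero element is a finite sum of irreducible (fundamental) elements, and the set of irreducible elements is finite. -/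
/-!
The solutions form the kernel of an additive map `ℕ^k →+ ℤ`, hence a submonoid that is also
closed under subtracting a smaller solution. Every nonzero solution splits into irreducibles by
well-founded induction on the pointwise order. If `u ≤ v` are distinct irreducibles then
`v = u + (v - u)` with both summands nonzero solutions, so the irreducibles form an antichain;
by Dickson's lemma (`ℕ^k` is well-quasi-ordered) an antichain is finite.
-/

/-- A nonnegative-integer solution of the homogeneous linear equation
`∑ i, c i * v i = 0`. -/
def IsSol19 {k : ℕ} (c : Fin k → ℤ) (v : Fin k → ℕ) : Prop :=
  ∑ i, c i * (v i : ℤ) = 0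

/-- An irreducible (fundamental) solution: a nonzero solution that is not the
sum of two nonzero solutions. -/
def IsIrr19 {k : ℕ} (c : Fin k → ℤ) (v : Fin k → ℕ) : Prop :=
  IsSol19 c v ∧ v ≠ 0 ∧
    ∀ a b, IsSol19 c a → IsSol19 c b → a ≠ 0 → b ≠ 0 → v ≠ a + b

namespace AddSubmonoid

variable {M : Type*} [AddCommMonoid M]

def IsFundamental (S : AddSubmonoid M) (v : M) : Prop :=
  v ∈ S ∧ v ≠ 0 ∧ ∀ a b, a ∈ S → b ∈ S → a ≠ 0 → b ≠ 0 → v ≠ a + b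

variable [PartialOrder M] [CanonicallyOrderedAdd M]

theorem exists_multiset_isFundamental_sum_eq [AddLeftStrictMono M] [WellFoundedLT M]
    (S : AddSubmonoid M) {v : M} (hv : v ∈ S) (hv₀ : v ≠ 0) :
    ∃ L : Multiset M, (∀ q ∈ L, S.IsFundamental q) ∧ L.sum = v := by
  induction v using WellFoundedLT.induction with
  | _ v ih =>
    by_cases hfund : S.IsFundamental v
    · exact ⟨{v}, by simpa using hfund, Multiset.sum_singleton v⟩
    obtain ⟨a, b, ha, hb, ha₀, hb₀, rfl⟩ : ∃ a b, a ∈ S ∧ b ∈ S ∧ a ≠ 0 ∧ b ≠ 0 ∧ v = a + b := by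
      simpa [IsFundamental, hv, hv₀] using hfund
    obtain ⟨La, hLa, rfl⟩ := ih a (lt_add_of_pos_right a (pos_iff_ne_zero.2 hb₀)) ha ha₀
    obtain ⟨Lb, hLb, rfl⟩ := ih b (lt_add_of_pos_left b (pos_iff_ne_zero.2 ha₀)) hb hb₀
    refine ⟨La + Lb, fun q hq => ?_, Multiset.sum_add La Lb⟩
    exact (Multiset.mem_add.1 hq).elim (hLa q) (hLb q)

variable [Sub M] [OrderedSub M]

theorem isAntichain_setOf_isFundamental (S : AddSubmonoid M)
    (hsub : ∀ u ∈ S, ∀ v ∈ S, u ≤ v → v - u ∈ S) :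
    IsAntichain (· ≤ ·) {v | S.IsFundamental v} := by
  rintro u ⟨hu, hu₀, -⟩ v ⟨hv, -, hv_irr⟩ hne hle
  refine hv_irr u (v - u) hu (hsub u hu v hv hle) hu₀ ?_ (add_tsub_cancel_of_le hle).symm
  exact fun h => hne (le_antisymm hle (tsub_eq_zero_iff_le.1 h))

theorem finite_setOf_isFundamental [WellQuasiOrderedLE M]
    (S : AddSubmonoid M) (hsub : ∀ u ∈ S, ∀ v ∈ S, u ≤ v → v - u ∈ S) :
    {v | S.IsFundamental v}.Finite :=
  (S.isAntichain_setOf_isFundamental hsub).finite_of_partiallyWellOrderedOn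
    (Set.isPWO_of_wellQuasiOrderedLE _)

end AddSubmonoid

theorem AddMonoidHom.tsub_mem_mker {M G : Type*} [AddCommMonoid M] [PartialOrder M]
    [CanonicallyOrderedAdd M] [Sub M] [OrderedSub M] [AddMonoid G] (f : M →+ G)
    {u v : M} (hu : u ∈ mker f) (hv : v ∈ mker f) (hle : u ≤ v) : v - u ∈ mker f := by
  rw [mem_mker] at *
  calc f (v - u) = f u + f (v - u) := by rw [hu, zero_add]
    _ = f v := by rw [← map_add, add_tsub_cancel_of_le hle]
    _ = 0 := hv

def linearFormNat {ι : Type*} [Fintype ι] (c : ι → ℤ) : (ι → ℕ) →+ ℤ where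
  toFun v := ∑ i, c i * (v i : ℤ)
  map_zero' := by simp
  map_add' a b := by simp [mul_add, Finset.sum_add_distrib]

theorem isSol19_iff_mem_mker {k : ℕ} (c : Fin k → ℤ) (v : Fin k → ℕ) :
    IsSol19 c v ↔ v ∈ AddMonoidHom.mker (linearFormNat c) :=
  Iff.rfl

theorem isIrr19_iff_isFundamental {k : ℕ} (c : Fin k → ℤ) (v : Fin k → ℕ) :
    IsIrr19 c v ↔ (AddMonoidHom.mker (linearFormNat c)).IsFundamental v :=
  Iff.rfl

theorem stmt_19 (k : ℕ) (c : Fin k → ℤ) :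
    IsSol19 c 0 ∧
    (∀ a b, IsSol19 c a → IsSol19 c b → IsSol19 c (a + b)) ∧
    (∀ v, IsSol19 c v → v ≠ 0 →
      ∃ L : Multiset (Fin k → ℕ), (∀ q ∈ L, IsIrr19 c q) ∧ L.sum = v) ∧
    {v : Fin k → ℕ | IsIrr19 c v}.Finite := by
  set S := AddMonoidHom.mker (linearFormNat c)
  simp only [isSol19_iff_mem_mker, isIrr19_iff_isFundamental]
  exact ⟨S.zero_mem, fun a b => S.add_mem, fun v => S.exists_multiset_isFundamental_sum_eq,
    S.finite_setOf_isFundamental fun u hu v hv => (linearFormNat c).tsub_mem_mker hu hv⟩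
end
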